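/- In the abstract Hilbert setting of the MHM lifting operators, if μ ∈ H^{−1/2}(∂K) is the normal trace of some σ ∈ H(div, K) with div σ constant on K, i.e., ⟨μ, v⟩_{∂K} = ∫_K (div σ) v + ∫_K σ · ∇v for all v ∈ H¹(K), then the lifting T^N_K(μ) satisfies: the distributional divergence of A∇T^N_K(μ) equals the constant −(1/|K|)⟨μ, 1⟩_{∂K} on K. -/

import Mathlib

open MeasureTheory
open scoped RealInnerProductSpace

/-- Divergence property of the Neumann lifting: if the functional μ is the
normal trace of σ ∈ H(div,K) with constant divergence c (i.e. the pairing
`pair v = ∫_K c v + ∫_K σ·∇v`), and τ = A∇T^N_K(μ) satisfies the defining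
variational equation ∫_K τ·∇v = pair v for all smooth mean-zero v, then the
distributional divergence of τ is the constant (1/|K|)⟨μ,1⟩_{∂K}; i.e.
−∫_K τ·∇φ = (1/|K|) pair(1) · ∫_K φ for all smooth φ compactly supported
in K. -/
theorem stmt_13
    {d : ℕ} (K : Set (EuclideanSpace ℝ (Fin d)))
    (vol : ℝ) (hvol : 0 < vol) (hvolK : vol = (volume K).toReal)
    (τ σ : EuclideanSpace ℝ (Fin d) → EuclideanSpace ℝ (Fin d))
    (c : ℝ)
    (pair : (EuclideanSpace ℝ (Fin d) → ℝ) → ℝ)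
    (hpair : ∀ v : EuclideanSpace ℝ (Fin d) → ℝ,
      pair v = (∫ x in K, c * v x) + ∫ x in K, ⟪σ x, gradient v x⟫)
    (hdivσ : ∀ φ : EuclideanSpace ℝ (Fin d) → ℝ, ContDiff ℝ (⊤ : ℕ∞) φ →
      HasCompactSupport φ → tsupport φ ⊆ K →
      ∫ x in K, c * φ x = - ∫ x in K, ⟪σ x, gradient φ x⟫)
    (hlift : ∀ v : EuclideanSpace ℝ (Fin d) → ℝ, ContDiff ℝ (⊤ : ℕ∞) v →
      (∫ x in K, v x) = 0 →
      ∫ x in K, ⟪τ x, gradient v x⟫ = pair v) :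
    ∀ φ : EuclideanSpace ℝ (Fin d) → ℝ, ContDiff ℝ (⊤ : ℕ∞) φ →
      HasCompactSupport φ → tsupport φ ⊆ K →
      - ∫ x in K, ⟪τ x, gradient φ x⟫ =
        ((1 / vol) * pair (fun _ => (1 : ℝ))) * ∫ x in K, φ x := by
  intro φ hφ hφc hφs
  have hμfin : volume K ≠ ⊤ := by
    intro h
    rw [hvolK, h] at hvol
    simp at hvol
  have hφint : IntegrableOn φ K := by
    exact (hφ.continuous.integrable_of_hasCompactSupport hφc).integrableOn
  set a : ℝ := (∫ x in K, φ x) / vol with ha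
  set v : EuclideanSpace ℝ (Fin d) → ℝ := fun x => φ x - a with hv
  have hvsmooth : ContDiff ℝ (⊤ : ℕ∞) v := hφ.sub contDiff_const
  have hgradv : ∀ x, gradient v x = gradient φ x := by
    intro x
    unfold gradient
    congr 1
    exact fderiv_sub_const a
  have hconst : (∫ _ in K, a) = vol * a := by
    rw [setIntegral_const, smul_eq_mul, measureReal_def, ← hvolK]
  have hvmean : (∫ x in K, v x) = 0 := by
    rw [hv, integral_sub hφint (integrableOn_const hμfin), hconst, ha]
    field_simp
    simp
  have key := hlift v hvsmooth hvmean
  rw [hpair] at key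
  have h1 : ∫ x in K, ⟪τ x, gradient v x⟫ = ∫ x in K, ⟪τ x, gradient φ x⟫ :=
    integral_congr_ae (Filter.Eventually.of_forall fun x => by
      show ⟪τ x, gradient v x⟫ = ⟪τ x, gradient φ x⟫
      rw [hgradv x])
  have h2 : ∫ x in K, ⟪σ x, gradient v x⟫ = ∫ x in K, ⟪σ x, gradient φ x⟫ :=
    integral_congr_ae (Filter.Eventually.of_forall fun x => by
      show ⟪σ x, gradient v x⟫ = ⟪σ x, gradient φ x⟫
      rw [hgradv x])
  have h3 : ∫ x in K, c * v x = (∫ x in K, c * φ x) - c * a * vol := by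
    rw [hv]
    have h4 : ∀ x, c * (φ x - a) = c * φ x - c * a := fun x => by ring
    simp_rw [h4]
    rw [integral_sub (hφint.const_mul c) (integrableOn_const hμfin)]
    rw [setIntegral_const, smul_eq_mul, measureReal_def, ← hvolK]
    ring
  rw [h1, h2, h3, hdivσ φ hφ hφc hφs] at key
  have hτ : ∫ x in K, ⟪τ x, gradient φ x⟫ = - (c * a * vol) := by
    rw [key]; ring
  have hpair1 : pair (fun _ => (1 : ℝ)) = c * vol := by
    rw [hpair]
    have h5 : ∀ x : EuclideanSpace ℝ (Fin d),
        ⟪σ x, gradient (fun _ => (1 : ℝ)) x⟫ = 0 := by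
      intro x
      rw [gradient_fun_const]
      simp
    simp_rw [h5]
    simp only [mul_one, integral_zero, add_zero]
    rw [setIntegral_const, smul_eq_mul, measureReal_def, ← hvolK, mul_comm]
  rw [hτ, hpair1, ha]
  field_simp
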